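/- arXiv:1710.05331 — 2 statements merged into one kernel-verified Lean document; each statement's English description precedes it below -/
import Mathlib

section
/- Let R be a commutative ring of prime characteristic p > 0 and 𝔞 ⊆ R an ideal generated by at most μ elements. If n > p^e(μ − 1), then 𝔞^n = (𝔞^(⌈n/p^e⌉ − μ))^[p^e] · 𝔞^(n − p^e(⌈n/p^e⌉ − μ)). -/
/-- The Frobenius power `I^[q]` of an ideal. -/
def frobPow {R : Type*} [CommSemiring R] (I : Ideal R) (q : ℕ) : Ideal R :=
  Ideal.span ((fun f => f ^ q) '' (I : Set R))

/-! The ideal `𝔞 ^ t` is generated by monomials of degree `t` in the generators of `𝔞`. If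
`t > μ (q - 1)`, the pigeonhole principle puts some generator `y` at least `q` times in such a
monomial, which therefore lies in `𝔞^[q] · 𝔞 ^ (t - q)`. Peeling off `k` such `q`-th powers gives
`𝔞 ^ (q k + m) ⊆ (𝔞 ^ k)^[q] · 𝔞 ^ m` whenever `m ≥ (μ - 1)(q - 1)`, and for `c = ⌈n / q⌉`,
`k = c - μ`, the remainder `m = n - q k` exceeds `q (μ - 1)`. The reverse inclusion is
`I^[q] ⊆ I ^ q`. -/

open Finset

section FrobeniusPower

variable {R : Type*} [CommRing R]

theorem pow_mem_frobPow {I : Ideal R} {q : ℕ} {x : R} (hx : x ∈ I) : x ^ q ∈ frobPow I q :=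
  Ideal.subset_span ⟨x, hx, rfl⟩

theorem frobPow_le_pow (I : Ideal R) (q : ℕ) : frobPow I q ≤ I ^ q := by
  rw [frobPow, Ideal.span_le]
  rintro _ ⟨x, hx, rfl⟩
  exact Ideal.pow_mem_pow hx q

theorem frobPow_top (q : ℕ) : frobPow (⊤ : Ideal R) q = ⊤ := by
  rw [Ideal.eq_top_iff_one, ← one_pow q]
  exact pow_mem_frobPow Submodule.mem_top

theorem frobPow_bot {q : ℕ} (hq : q ≠ 0) : frobPow (⊥ : Ideal R) q = ⊥ := by
  simp [frobPow, zero_pow hq]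

theorem frobPow_mul_frobPow_le (I J : Ideal R) (q : ℕ) :
    frobPow I q * frobPow J q ≤ frobPow (I * J) q := by
  rw [frobPow, frobPow, Ideal.span_mul_span', Ideal.span_le]
  rintro _ ⟨_, ⟨x, hx, rfl⟩, _, ⟨y, hy, rfl⟩, rfl⟩
  simpa only [mul_pow, SetLike.mem_coe] using pow_mem_frobPow (q := q) (Ideal.mul_mem_mul hx hy)

theorem frobPow_pow_mul_pow_le (I : Ideal R) (q k m : ℕ) :
    frobPow (I ^ k) q * I ^ m ≤ I ^ (q * k + m) := by
  rw [pow_add, mul_comm q, pow_mul]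
  exact Ideal.mul_mono_left (frobPow_le_pow _ _)

theorem prod_mem_frobPow_mul_pow [DecidableEq R] {ι : Type*} {I : Ideal R} {q : ℕ}
    {s : Finset ι} {g : ι → R} (hg : ∀ i ∈ s, g i ∈ I) {y : R} (hy : y ∈ I)
    (hq : q ≤ #{i ∈ s | g i = y}) :
    ∏ i ∈ s, g i ∈ frobPow I q * I ^ (#s - q) := by
  classical
  obtain ⟨T, hTy, hTq⟩ := exists_subset_card_eq hq
  have hTs : T ⊆ s := hTy.trans (filter_subset _ _)
  have hT : ∏ i ∈ T, g i = y ^ q := by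
    rw [prod_congr rfl fun i hi => (mem_filter.1 (hTy hi)).2, prod_const, hTq]
  have hrest : ∏ i ∈ s \ T, g i ∈ I ^ #(s \ T) := by
    simpa using Ideal.prod_mem_prod fun i hi => hg i (mem_sdiff.1 hi).1
  rw [← prod_sdiff hTs, hT]
  rw [card_sdiff_of_subset hTs, hTq] at hrest
  exact Ideal.mul_mem_mul_rev (pow_mem_frobPow hy) hrest

/-- A monomial of degree `t > #S (q - 1)` in the elements of `S` repeats one of them `q` times. -/
theorem pow_le_frobPow_mul_pow_sub {I : Ideal R} {S : Finset R} (hS : Ideal.span (S : Set R) = I)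
    {q t : ℕ} (ht : #S * (q - 1) < t) : I ^ t ≤ frobPow I q * I ^ (t - q) := by
  classical
  subst hS
  rw [Ideal.span, Submodule.span_pow, Submodule.span_le]
  intro _ hx
  obtain ⟨f, rfl⟩ := Set.mem_pow.1 hx
  rw [List.prod_ofFn]
  have hf : ∀ i ∈ (univ : Finset (Fin t)), (f i : R) ∈ S := fun i _ => (f i).2
  obtain ⟨y, hyS, hy⟩ := exists_lt_card_fiber_of_mul_lt_card_of_maps_to hf (by simpa using ht)
  have := prod_mem_frobPow_mul_pow (s := univ) (fun i _ => Ideal.subset_span (hf i (mem_univ i)))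
    (Ideal.subset_span hyS) (q := q) (by omega)
  rw [card_univ, Fintype.card_fin] at this
  exact this

theorem pow_le_frobPow_pow_mul_pow {I : Ideal R} {S : Finset R}
    (hS : Ideal.span (S : Set R) = I) {q : ℕ} (hq : 0 < q) (k : ℕ) {m : ℕ}
    (hm : (#S - 1) * (q - 1) ≤ m) : I ^ (q * k + m) ≤ frobPow (I ^ k) q * I ^ m := by
  induction k with
  | zero => simp [frobPow_top]
  | succ k ih =>
    have ht : #S * (q - 1) < q * (k + 1) + m := by
      have hq1 : q - 1 < q * k + q := by omega
      rw [Nat.sub_one_mul] at hm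
      rw [mul_add, mul_one]
      omega
    have hsub : q * (k + 1) + m - q = q * k + m := by rw [mul_add, mul_one]; omega
    calc I ^ (q * (k + 1) + m)
        ≤ frobPow I q * I ^ (q * k + m) := hsub ▸ pow_le_frobPow_mul_pow_sub hS ht
      _ ≤ frobPow I q * (frobPow (I ^ k) q * I ^ m) := Ideal.mul_mono_right ih
      _ ≤ frobPow (I ^ (k + 1)) q * I ^ m := by
          rw [← mul_assoc, pow_succ']
          exact Ideal.mul_mono_left (frobPow_mul_frobPow_le _ _ _)

end FrobeniusPower

theorem le_mul_and_mul_lt_add_of_eq_ceil_div {n q c : ℕ} (hq : 0 < q)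
    (hc : (c : ℤ) = ⌈(n : ℚ) / q⌉) : n ≤ q * c ∧ q * c < n + q := by
  obtain ⟨hlt, hle⟩ := Int.ceil_eq_iff.1 hc.symm
  have hq' : (0 : ℚ) < q := by exact_mod_cast hq
  push_cast at hlt hle
  rw [sub_lt_iff_lt_add, div_add_one hq'.ne', lt_div_iff₀ hq'] at hlt
  rw [div_le_iff₀ hq'] at hle
  constructor
  · exact_mod_cast (by linarith : (n : ℚ) ≤ q * c)
  · exact_mod_cast (by linarith : (q : ℚ) * c < n + q)

theorem pow_eq_frobPow_mul_ceil_general {R : Type*} [CommRing R] (p : ℕ) (hp : p.Prime)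
    (𝔞 : Ideal R) (μ : ℕ) (hμ : ∃ S : Finset R, S.card ≤ μ ∧ Ideal.span (S : Set R) = 𝔞)
    (n e : ℕ)
    (c : ℕ) (hc : (c : ℤ) = ⌈(n : ℚ) / ((p : ℚ) ^ e)⌉) (hcμ : μ ≤ c) :
    𝔞 ^ n = frobPow (𝔞 ^ (c - μ)) (p ^ e) * 𝔞 ^ (n - p ^ e * (c - μ)) := by
  obtain ⟨S, hcard, rfl⟩ := hμ
  have hq : 0 < p ^ e := pow_pos hp.pos e
  obtain ⟨hnc, hcn⟩ := le_mul_and_mul_lt_add_of_eq_ceil_div hq (by exact_mod_cast hc)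
  set q := p ^ e
  rcases Nat.eq_zero_or_pos μ with rfl | hμ
  · have hS : Ideal.span (S : Set R) = ⊥ := by simp [card_eq_zero.1 (Nat.le_zero.1 hcard)]
    rcases Nat.eq_zero_or_pos c with rfl | hc
    · obtain rfl : n = 0 := by omega
      simp [frobPow_top]
    · have hqc : q ≤ q * c := Nat.le_mul_of_pos_right q hc
      rw [hS, Ideal.bot_pow (by omega), Ideal.bot_pow (by omega), frobPow_bot hq.ne',
        Submodule.bot_mul]
  · set k := c - μ
    have hck : q * k + q * μ = q * c := by rw [← mul_add]; congr 1; omega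
    have hqμ : q ≤ q * μ := Nat.le_mul_of_pos_right q hμ
    have hSμ : (#S - 1) * (q - 1) ≤ q * μ - q := by
      rw [← Nat.mul_sub_one, mul_comm q]
      exact Nat.mul_le_mul (by omega) (by omega)
    obtain ⟨m, rfl⟩ : ∃ m, n = q * k + m := ⟨n - q * k, by omega⟩
    rw [Nat.add_sub_cancel_left]
    exact le_antisymm (pow_le_frobPow_pow_mul_pow rfl hq k (by omega))
      (frobPow_pow_mul_pow_le _ q k m)

/-- If `𝔞` has at most `μ` generators and `n > p^e(μ − 1)`, then
`𝔞^n = (𝔞^(⌈n/p^e⌉ − μ))^[p^e] · 𝔞^(n − p^e(⌈n/p^e⌉ − μ))`. Here `c = ⌈n/p^e⌉`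
(with `μ ≤ c`, which follows from the hypotheses when `μ ≥ 1`). -/
theorem pow_eq_frobPow_mul_ceil {R : Type*} [CommRing R] (p : ℕ) (hp : p.Prime) [CharP R p]
    (𝔞 : Ideal R) (μ : ℕ) (hμ : ∃ S : Finset R, S.card ≤ μ ∧ Ideal.span (S : Set R) = 𝔞)
    (n e : ℕ) (hn : (p : ℤ) ^ e * ((μ : ℤ) - 1) < (n : ℤ))
    (c : ℕ) (hc : (c : ℤ) = ⌈(n : ℚ) / ((p : ℚ) ^ e)⌉) (hcμ : μ ≤ c) :
    𝔞 ^ n = frobPow (𝔞 ^ (c - μ)) (p ^ e) * 𝔞 ^ (n - p ^ e * (c - μ)) :=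
  pow_eq_frobPow_mul_ceil_general p hp 𝔞 μ hμ n e c hc hcμ
end

section
/- Let (R, 𝔪) be a commutative Noetherian local ring, 𝒰 a non-principal ultrafilter on ℕ, and for each m ∈ ℕ let 𝔞_m, 𝔟_m ⊆ R be ideals. Let R# := R*/⋂_n (𝔪*)^n be the catapower, and denote by [𝔞_m]_m ⊆ R# the image of ulim_m 𝔞_m. If [𝔞_m]_m ⊆ [𝔟_m]_m, then for every 𝔪-primary ideal 𝔮 ⊆ R, the set { m ∈ ℕ : 𝔞_m ⊆ 𝔟_m + 𝔮 } belongs to 𝒰. -/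
open Filter

/-- The ultraproduct `ulim_m 𝔞_m` of a family of ideals `𝔞_m ⊆ R`, as an ideal of the
ultrapower `R* = (∏_m R)/∼_𝒰`, realized as the germ ring at the ultrafilter `𝒰`. -/
def ulimIdeal {R : Type*} [CommRing R] (𝒰 : Ultrafilter ℕ) (a : ℕ → Ideal R) :
    Ideal ((𝒰 : Filter ℕ).Germ R) where
  carrier := {x | ∃ f : ℕ → R, (∀ᶠ m in (𝒰 : Filter ℕ), f m ∈ a m) ∧ x = Filter.Germ.ofFun f}
  zero_mem' := ⟨0, Filter.Eventually.of_forall fun m => (a m).zero_mem, rfl⟩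
  add_mem' := by
    rintro x y ⟨f, hf, rfl⟩ ⟨g, hg, rfl⟩
    exact ⟨f + g, (hf.and hg).mono fun m h => (a m).add_mem h.1 h.2, rfl⟩
  smul_mem' := by
    intro c x hx
    obtain ⟨f, hf, rfl⟩ := hx
    refine Filter.Germ.inductionOn c fun g => ?_
    exact ⟨g * f, hf.mono fun m h => (a m).mul_mem_left _ h, rfl⟩

/-- The kernel `⋂_n (𝔪*)^n` of the projection from the ultrapower to the catapower of a
local ring `(R, 𝔪)`. -/
def cataKernel {R : Type*} [CommRing R] [IsLocalRing R] (𝒰 : Ultrafilter ℕ) :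
    Ideal ((𝒰 : Filter ℕ).Germ R) :=
  ⨅ n : ℕ, (ulimIdeal 𝒰 (fun _ => IsLocalRing.maximalIdeal R)) ^ n

/-!
The kernel `⋂_n (𝔪*)^n` lies in `(𝔪^N)* ⊆ 𝔮*` as soon as `𝔪^N ⊆ 𝔮`, so the hypothesis gives
`ulim 𝔞_m ⊆ ulim 𝔟_m + 𝔮* ⊆ ulim (𝔟_m + 𝔮)`. An inclusion of ultraproducts of ideals
descends to `𝒰`-almost all factors: otherwise a choice of elements `x_m ∈ 𝔞_m \ (𝔟_m + 𝔮)`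
defines an element of the left-hand side outside the right-hand side.
-/

section Ultraproduct

variable {R : Type*} [CommRing R] (𝒰 : Ultrafilter ℕ)

lemma ofFun_mem_ulimIdeal_iff {a : ℕ → Ideal R} {f : ℕ → R} :
    (Germ.ofFun f : (𝒰 : Filter ℕ).Germ R) ∈ ulimIdeal 𝒰 a ↔
      ∀ᶠ m in (𝒰 : Filter ℕ), f m ∈ a m := by
  refine ⟨?_, fun hf => ⟨f, hf, rfl⟩⟩
  rintro ⟨g, hg, hfg⟩
  filter_upwards [hg, Germ.coe_eq.1 hfg] with m hgm hfgm
  rwa [hfgm]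

lemma ulimIdeal_le_ulimIdeal_iff {a b : ℕ → Ideal R} :
    ulimIdeal 𝒰 a ≤ ulimIdeal 𝒰 b ↔ ∀ᶠ m in (𝒰 : Filter ℕ), a m ≤ b m := by
  constructor
  · intro hab
    by_contra hbad
    have hwitness : ∀ᶠ m in (𝒰 : Filter ℕ), ∃ x, x ∈ a m ∧ x ∉ b m := by
      simpa only [SetLike.not_le_iff_exists] using Ultrafilter.eventually_not.2 hbad
    obtain ⟨f, hf⟩ := hwitness.choice
    have hfb := (ofFun_mem_ulimIdeal_iff 𝒰).1
      (hab ((ofFun_mem_ulimIdeal_iff 𝒰).2 (hf.mono fun m hm => hm.1)))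
    obtain ⟨m, hfm, hfbm⟩ := (hf.and hfb).exists
    exact hfm.2 hfbm
  · rintro hab x ⟨f, hf, rfl⟩
    exact (ofFun_mem_ulimIdeal_iff 𝒰).2 ((hab.and hf).mono fun m hm => hm.1 hm.2)

lemma ulimIdeal_mul_le (a b : ℕ → Ideal R) :
    ulimIdeal 𝒰 a * ulimIdeal 𝒰 b ≤ ulimIdeal 𝒰 (fun m => a m * b m) := by
  rw [Ideal.mul_le]
  rintro x ⟨f, hf, rfl⟩ y ⟨g, hg, rfl⟩
  exact ⟨f * g, (hf.and hg).mono fun m hm => Ideal.mul_mem_mul hm.1 hm.2, rfl⟩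

lemma ulimIdeal_pow_le (a : ℕ → Ideal R) (n : ℕ) :
    ulimIdeal 𝒰 a ^ n ≤ ulimIdeal 𝒰 (fun m => a m ^ n) := by
  induction n with
  | zero =>
    intro x _
    refine Germ.inductionOn x fun f => ?_
    exact ⟨f, .of_forall fun m => by simp, rfl⟩
  | succ n ih =>
    calc ulimIdeal 𝒰 a ^ (n + 1) = ulimIdeal 𝒰 a ^ n * ulimIdeal 𝒰 a := pow_succ _ _
      _ ≤ ulimIdeal 𝒰 (fun m => a m ^ n) * ulimIdeal 𝒰 a := Ideal.mul_mono_left ih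
      _ ≤ ulimIdeal 𝒰 (fun m => a m ^ n * a m) := ulimIdeal_mul_le 𝒰 _ _
      _ = ulimIdeal 𝒰 (fun m => a m ^ (n + 1)) := by simp only [pow_succ]

end Ultraproduct

lemma cataKernel_le_ulimIdeal_const {R : Type*} [CommRing R] [IsLocalRing R]
    (𝒰 : Ultrafilter ℕ) {𝔮 : Ideal R} (h𝔮 : ∃ n : ℕ, IsLocalRing.maximalIdeal R ^ n ≤ 𝔮) :
    cataKernel 𝒰 ≤ ulimIdeal 𝒰 (fun _ => 𝔮) := by
  obtain ⟨n, hn⟩ := h𝔮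
  calc cataKernel 𝒰 ≤ ulimIdeal 𝒰 (fun _ => IsLocalRing.maximalIdeal R) ^ n := iInf_le _ n
    _ ≤ ulimIdeal 𝒰 (fun _ => IsLocalRing.maximalIdeal R ^ n) := ulimIdeal_pow_le 𝒰 _ n
    _ ≤ ulimIdeal 𝒰 (fun _ => 𝔮) := (ulimIdeal_le_ulimIdeal_iff 𝒰).2 (.of_forall fun _ => hn)

theorem catapower_inclusion_general (R : Type*) [CommRing R] [IsLocalRing R]
    (𝒰 : Ultrafilter ℕ)
    (𝔞 𝔟 : ℕ → Ideal R)
    (h : Ideal.map (Ideal.Quotient.mk (cataKernel (R := R) 𝒰)) (ulimIdeal 𝒰 𝔞) ≤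
      Ideal.map (Ideal.Quotient.mk (cataKernel (R := R) 𝒰)) (ulimIdeal 𝒰 𝔟))
    (𝔮 : Ideal R) (h𝔮 : ∃ n : ℕ, IsLocalRing.maximalIdeal R ^ n ≤ 𝔮) :
    {m : ℕ | 𝔞 m ≤ 𝔟 m + 𝔮} ∈ 𝒰 := by
  have h𝔞 : ulimIdeal 𝒰 𝔞 ≤ ulimIdeal 𝒰 𝔟 ⊔ cataKernel 𝒰 := fun x hx =>
    Ideal.mem_quotient_iff_mem_sup.1 (h (Ideal.mem_map_of_mem _ hx))
  have h𝔟 : ulimIdeal 𝒰 𝔟 ⊔ cataKernel 𝒰 ≤ ulimIdeal 𝒰 (fun m => 𝔟 m + 𝔮) := by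
    refine sup_le ((ulimIdeal_le_ulimIdeal_iff 𝒰).2 (.of_forall fun _ => le_sup_left)) ?_
    exact (cataKernel_le_ulimIdeal_const 𝒰 h𝔮).trans
      ((ulimIdeal_le_ulimIdeal_iff 𝒰).2 (.of_forall fun _ => le_sup_right))
  exact (ulimIdeal_le_ulimIdeal_iff 𝒰).1 (h𝔞.trans h𝔟)

/-- If `[𝔞_m]_m ⊆ [𝔟_m]_m` in the catapower `R# = R*/⋂_n (𝔪*)^n` of a Noetherian local
ring `(R, 𝔪)`, then for every `𝔪`-primary ideal `𝔮`, the set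
`{ m : 𝔞_m ⊆ 𝔟_m + 𝔮 }` belongs to the ultrafilter. -/
theorem catapower_inclusion (R : Type*) [CommRing R] [IsNoetherianRing R] [IsLocalRing R]
    (𝒰 : Ultrafilter ℕ) (h𝒰 : ∀ A : Set ℕ, A.Finite → A ∉ 𝒰)
    (𝔞 𝔟 : ℕ → Ideal R)
    (h : Ideal.map (Ideal.Quotient.mk (cataKernel (R := R) 𝒰)) (ulimIdeal 𝒰 𝔞) ≤
      Ideal.map (Ideal.Quotient.mk (cataKernel (R := R) 𝒰)) (ulimIdeal 𝒰 𝔟))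
    (𝔮 : Ideal R) (h𝔮 : ∃ n : ℕ, IsLocalRing.maximalIdeal R ^ n ≤ 𝔮) :
    {m : ℕ | 𝔞 m ≤ 𝔟 m + 𝔮} ∈ 𝒰 :=
  catapower_inclusion_general R 𝒰 𝔞 𝔟 h 𝔮 h𝔮
end
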